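/- Let Cl(1,10) be the Clifford algebra of ℝ^{1,10} with orthonormal basis e₀ (timelike, ι(e₀)² = −1) and e₁, …, e₁₀ (spacelike, square +1), convention ι(v)² = ⟨v,v⟩·1. Fix α ∈ ℝ and define G_α := ι(e₀)·( cos α·( ι(e₅)ι(e₆)ι(e₇) − ι(e₅)ι(e₉)ι(e₁₀) − ι(e₈)ι(e₆)ι(e₁₀) − ι(e₈)ι(e₉)ι(e₇) ) − sin α·( ι(e₅)ι(e₆)ι(e₁₀) + ι(e₅)ι(e₉)ι(e₇) + ι(e₈)ι(e₆)ι(e₇) − ι(e₈)ι(e₉)ι(e₁₀) ) ) and P := (1/√3)·(3/2)³·G_α. Then for all i ≠ j in {1,2,3,4}, the element ( −(1/18)·(4/9)·((1/3)·(3/2)⁴) + (2/144)·(4/9)·P² − 1/2 )·ι(e_i)·ι(e_j) is a unit of Cl(1,10). Consequently it annihilates no nonzero element of any Cl(1,10)-module, so the one-parameter circle of homogeneous M-theory backgrounds with γ₁ = γ₂ = γ₃ = 4/9 admits no nonzero D-parallel spinors, i.e. preserves no supersymmetry. -/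
import Mathlib


open CliffordAlgebra

/-- The quadratic form of `ℝ^{1,10}`: coordinate `0` is timelike (`e₀² = −1`),
coordinates `1, …, 10` are spacelike (`eᵢ² = +1`); convention `ι(v)² = ⟨v,v⟩·1`. -/
noncomputable def Q110 : QuadraticForm ℝ (Fin 11 → ℝ) :=
  QuadraticMap.weightedSumSquares ℝ (fun i : Fin 11 => if i = 0 then (-1 : ℝ) else 1)

/-- The Clifford generators `e₀, e₁, …, e₁₀` of `Cl(1,10)`. -/
noncomputable def eM (i : Fin 11) : CliffordAlgebra Q110 :=
  ι Q110 (Pi.single i 1)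

/-- The element
`G_α = e₀·( cos α·(e₅e₆e₇ − e₅e₉e₁₀ − e₈e₆e₁₀ − e₈e₉e₇)
          − sin α·(e₅e₆e₁₀ + e₅e₉e₇ + e₈e₆e₇ − e₈e₉e₁₀) )` of `Cl(1,10)`. -/
noncomputable def GElt (α : ℝ) : CliffordAlgebra Q110 :=
  eM 0 * (Real.cos α •
      (eM 5 * eM 6 * eM 7 - eM 5 * eM 9 * eM 10 - eM 8 * eM 6 * eM 10 - eM 8 * eM 9 * eM 7)
    - Real.sin α •
      (eM 5 * eM 6 * eM 10 + eM 5 * eM 9 * eM 7 + eM 8 * eM 6 * eM 7 - eM 8 * eM 9 * eM 10))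

/-- `P = (1/√3)·(3/2)³·G_α`, the Clifford action of the rescaled invariant 4-form. -/
noncomputable def PElt (α : ℝ) : CliffordAlgebra Q110 :=
  ((1 / Real.sqrt 3) * (3 / 2) ^ 3) • GElt α

/-! ### Basic Clifford relations -/

lemma Q110_single (i : Fin 11) : Q110 (Pi.single i 1) = if i = 0 then (-1:ℝ) else 1 := by
  simp [Q110, QuadraticMap.weightedSumSquares_apply, Pi.single_apply]

lemma Q110_polar (i j : Fin 11) (h : i ≠ j) :
    QuadraticMap.polar Q110 (Pi.single i 1) (Pi.single j 1) = 0 := by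
  simp only [QuadraticMap.polar, Q110, QuadraticMap.weightedSumSquares_apply, Pi.add_apply,
    Pi.single_apply, smul_eq_mul]
  rw [← Finset.sum_sub_distrib, ← Finset.sum_sub_distrib]
  apply Finset.sum_eq_zero
  intro k _
  rcases eq_or_ne k i with rfl|hki <;> rcases eq_or_ne k j with rfl|hkj <;> simp_all

lemma eM_sq (i : Fin 11) : eM i * eM i = algebraMap ℝ _ (if i = 0 then (-1:ℝ) else 1) := by
  rw [eM, ι_sq_scalar, Q110_single]

lemma eM_anticomm {i j : Fin 11} (h : i ≠ j) : eM i * eM j = -(eM j * eM i) := by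
  have := ι_mul_ι_add_swap (Q := Q110) (Pi.single i 1) (Pi.single j 1)
  rw [Q110_polar i j h, map_zero] at this
  rw [eM, eM, eq_neg_iff_add_eq_zero, this]

lemma eM_swap {i j : Fin 11} (h : j < i) : eM i * eM j = -(eM j * eM i) :=
  eM_anticomm h.ne'
lemma eM_swap' {i j : Fin 11} (x : CliffordAlgebra Q110) (h : j < i) :
    eM i * (eM j * x) = -(eM j * (eM i * x)) := by
  rw [← mul_assoc, eM_swap h, neg_mul, mul_assoc]
lemma eM_sq_one {i : Fin 11} (h : i ≠ 0) : eM i * eM i = 1 := by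
  rw [eM_sq, if_neg h, map_one]
lemma eM_sq_one' {i : Fin 11} (x : CliffordAlgebra Q110) (h : i ≠ 0) :
    eM i * (eM i * x) = x := by
  rw [← mul_assoc, eM_sq_one h, one_mul]
lemma eM0_sq : eM 0 * eM 0 = -1 := by rw [eM_sq]; simp
lemma eM0_sq' (x : CliffordAlgebra Q110) : eM 0 * (eM 0 * x) = -x := by
  rw [← mul_assoc, eM0_sq, neg_one_mul]

/-! ### The key elements -/

noncomputable def AElt : CliffordAlgebra Q110 :=
  eM 0 * (eM 5 * eM 6 * eM 7 - eM 5 * eM 9 * eM 10 - eM 8 * eM 6 * eM 10 - eM 8 * eM 9 * eM 7)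
noncomputable def BElt : CliffordAlgebra Q110 :=
  eM 0 * (eM 5 * eM 6 * eM 10 + eM 5 * eM 9 * eM 7 + eM 8 * eM 6 * eM 7 - eM 8 * eM 9 * eM 10)
noncomputable def WElt : CliffordAlgebra Q110 :=
  1 + eM 6 * eM 7 * eM 9 * eM 10 + eM 5 * eM 7 * eM 8 * eM 10 + eM 5 * eM 6 * eM 8 * eM 9

set_option maxHeartbeats 2000000 in
lemma AA : AElt * AElt = (-4 : ℝ) • WElt := by
  rw [AElt, WElt]
  simp (config := { decide := true }) only [mul_sub, sub_mul, mul_add, add_mul,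
    mul_assoc, eM_swap, eM_swap', eM_sq_one, eM_sq_one', eM0_sq, eM0_sq',
    mul_neg, neg_mul, neg_neg, mul_one, neg_sub, sub_neg_eq_add, one_mul]
  module

set_option maxHeartbeats 2000000 in
lemma BB : BElt * BElt = (-4 : ℝ) • WElt := by
  rw [BElt, WElt]
  simp (config := { decide := true }) only [mul_sub, sub_mul, mul_add, add_mul,
    mul_assoc, eM_swap, eM_swap', eM_sq_one, eM_sq_one', eM0_sq, eM0_sq',
    mul_neg, neg_mul, neg_neg, mul_one, neg_sub, sub_neg_eq_add, one_mul]
  module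

set_option maxHeartbeats 2000000 in
lemma AB : AElt * BElt = -(BElt * AElt) := by
  rw [AElt, BElt]
  simp (config := { decide := true }) only [mul_sub, sub_mul, mul_add, add_mul,
    mul_assoc, eM_swap, eM_swap', eM_sq_one, eM_sq_one', eM0_sq, eM0_sq',
    mul_neg, neg_mul, neg_neg, mul_one, neg_sub, sub_neg_eq_add, one_mul]
  module

set_option maxHeartbeats 2000000 in
lemma WW : WElt * WElt = (4 : ℝ) • WElt := by
  rw [WElt]
  simp (config := { decide := true }) only [mul_sub, sub_mul, mul_add, add_mul,
    mul_assoc, eM_swap, eM_swap', eM_sq_one, eM_sq_one', eM0_sq, eM0_sq',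
    mul_neg, neg_mul, neg_neg, mul_one, neg_sub, sub_neg_eq_add, one_mul]
  module

lemma GG (α : ℝ) : GElt α * GElt α = (-4 : ℝ) • WElt := by
  have hG : GElt α = Real.cos α • AElt - Real.sin α • BElt := by
    rw [GElt, AElt, BElt, mul_sub, mul_smul_comm, mul_smul_comm]
  have hs : Real.sin α * Real.sin α = 1 - Real.cos α * Real.cos α := by
    have h := Real.sin_sq_add_cos_sq α
    nlinarith [h]
  rw [hG, sub_mul, mul_sub, mul_sub]
  simp only [smul_mul_assoc, mul_smul_comm, smul_smul]
  rw [AA, BB, AB, hs]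
  module

lemma PP (α : ℝ) : ((2 / 144 : ℝ) * (4 / 9)) • (PElt α) ^ 2 = (-3/32 : ℝ) • WElt := by
  have h3 : Real.sqrt 3 * Real.sqrt 3 = 3 := Real.mul_self_sqrt (by norm_num)
  have hs0 : Real.sqrt 3 ≠ 0 := by positivity
  have hk : ((1 / Real.sqrt 3) * (3 / 2) ^ 3) * ((1 / Real.sqrt 3) * (3 / 2) ^ 3)
      = (243/64 : ℝ) := by
    field_simp
    nlinarith [h3]
  rw [pow_two, PElt, smul_mul_assoc, mul_smul_comm, GG, smul_smul, smul_smul, smul_smul]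
  congr 1
  field_simp
  nlinarith [h3]

/-! ### Commutation with `e_i e_j` -/

lemma comm_pair {k i j : Fin 11} (hki : k ≠ i) (hkj : k ≠ j) :
    Commute (eM k) (eM i * eM j) := by
  show eM k * (eM i * eM j) = (eM i * eM j) * eM k
  rw [← mul_assoc, eM_anticomm hki, neg_mul, mul_assoc, eM_anticomm hkj, mul_neg, neg_neg,
    mul_assoc]

lemma comm_W {i j : Fin 11} (hi : i ∈ ({1, 2, 3, 4} : Set (Fin 11)))
    (hj : j ∈ ({1, 2, 3, 4} : Set (Fin 11))) : Commute WElt (eM i * eM j) := by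
  simp only [Set.mem_insert_iff, Set.mem_singleton_iff] at hi hj
  have h : ∀ k : Fin 11, k = 5 ∨ k = 6 ∨ k = 7 ∨ k = 8 ∨ k = 9 ∨ k = 10 →
      Commute (eM k) (eM i * eM j) := by
    intro k hk
    apply comm_pair
    · rcases hi with rfl|rfl|rfl|rfl <;> rcases hk with rfl|rfl|rfl|rfl|rfl|rfl <;> decide
    · rcases hj with rfl|rfl|rfl|rfl <;> rcases hk with rfl|rfl|rfl|rfl|rfl|rfl <;> decide
  rw [WElt]
  exact (((Commute.one_left _).add_left
    ((((h 6 (by tauto)).mul_left (h 7 (by tauto))).mul_left (h 9 (by tauto))).mul_left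
      (h 10 (by tauto)))).add_left
    ((((h 5 (by tauto)).mul_left (h 7 (by tauto))).mul_left (h 8 (by tauto))).mul_left
      (h 10 (by tauto)))).add_left
    ((((h 5 (by tauto)).mul_left (h 6 (by tauto))).mul_left (h 8 (by tauto))).mul_left
      (h 9 (by tauto)))


/-- For every `α ∈ ℝ` and all `i ≠ j` in `{1,2,3,4}`, the curvature
element `( −(1/18)·(4/9)·((1/3)·(3/2)⁴) + (2/144)·(4/9)·P² − 1/2 )·e_i·e_j` is a unit
of `Cl(1,10)`; consequently it annihilates no nonzero element of any
`Cl(1,10)`-module, so the circle of homogeneous M-theory backgrounds with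
`γ₁ = γ₂ = γ₃ = 4/9` admits no nonzero `D`-parallel spinors. -/
theorem circle_background_curvature_isUnit
    (α : ℝ) (i j : Fin 11)
    (hi : i ∈ ({1, 2, 3, 4} : Set (Fin 11))) (hj : j ∈ ({1, 2, 3, 4} : Set (Fin 11)))
    (hij : i ≠ j) :
    IsUnit ((algebraMap ℝ (CliffordAlgebra Q110)
          (-(1 / 18) * (4 / 9) * ((1 / 3) * (3 / 2) ^ 4) - 1 / 2)
        + ((2 / 144 : ℝ) * (4 / 9)) • (PElt α) ^ 2) * (eM i * eM j)) ∧
    ∀ (M : Type) [AddCommGroup M] [Module (CliffordAlgebra Q110) M] (m : M),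
      ((algebraMap ℝ (CliffordAlgebra Q110)
          (-(1 / 18) * (4 / 9) * ((1 / 3) * (3 / 2) ^ 4) - 1 / 2)
        + ((2 / 144 : ℝ) * (4 / 9)) • (PElt α) ^ 2) * (eM i * eM j)) • m = 0 → m = 0 := by
  set u : CliffordAlgebra Q110 :=
    algebraMap ℝ (CliffordAlgebra Q110)
        (-(1 / 18) * (4 / 9) * ((1 / 3) * (3 / 2) ^ 4) - 1 / 2)
      + ((2 / 144 : ℝ) * (4 / 9)) • (PElt α) ^ 2 with hu_def
  have hu : u = (-13/24 : ℝ) • 1 + (-3/32 : ℝ) • WElt := by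
    rw [hu_def, PP, Algebra.algebraMap_eq_smul_one]
    norm_num
  set v : CliffordAlgebra Q110 := (-24/13 : ℝ) • 1 + (27/143 : ℝ) • WElt with hv_def
  have huv : u * v = 1 := by
    rw [hu, hv_def]
    simp only [add_mul, mul_add, smul_mul_assoc, mul_smul_comm, smul_smul, one_mul, mul_one, WW,
      smul_smul]
    module
  have hvu : v * u = 1 := by
    rw [hu, hv_def]
    simp only [add_mul, mul_add, smul_mul_assoc, mul_smul_comm, smul_smul, one_mul, mul_one, WW,
      smul_smul]
    module
  -- z := eM i * eM j
  have hi' := hi; have hj' := hj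
  simp only [Set.mem_insert_iff, Set.mem_singleton_iff] at hi' hj'
  have hi0 : i ≠ 0 := by rcases hi' with rfl|rfl|rfl|rfl <;> decide
  have hj0 : j ≠ 0 := by rcases hj' with rfl|rfl|rfl|rfl <;> decide
  have hzz : (eM i * eM j) * (eM i * eM j) = -1 := by
    rw [mul_assoc, ← mul_assoc (eM j), eM_anticomm hij.symm, neg_mul, mul_neg,
      mul_assoc (eM i) (eM j) (eM j), eM_sq_one hj0, mul_one, eM_sq_one hi0]
  -- commutation of u, v with z
  have hcW : Commute WElt (eM i * eM j) := comm_W hi hj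
  have hcu : Commute u (eM i * eM j) := by
    rw [hu]
    exact ((Commute.one_left _).smul_left _).add_left (hcW.smul_left _)
  have hcv : Commute v (eM i * eM j) := by
    rw [hv_def]
    exact ((Commute.one_left _).smul_left _).add_left (hcW.smul_left _)
  have hinv1 : (u * (eM i * eM j)) * (-(v * (eM i * eM j))) = 1 := by
    rw [mul_neg, mul_assoc, ← mul_assoc (eM i * eM j), ← hcv.eq, mul_assoc, hzz]
    simp [huv]
  have hinv2 : (-(v * (eM i * eM j))) * (u * (eM i * eM j)) = 1 := by
    rw [neg_mul, mul_assoc, ← mul_assoc (eM i * eM j), ← hcu.eq, mul_assoc, hzz]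
    simp [hvu]
  refine ⟨⟨⟨u * (eM i * eM j), -(v * (eM i * eM j)), hinv1, hinv2⟩, rfl⟩, ?_⟩
  intro M _ _ m hm
  have : ((-(v * (eM i * eM j))) * (u * (eM i * eM j))) • m = m := by
    rw [hinv2, one_smul]
  rw [mul_smul, hm, smul_zero] at this
  exact this.symm
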